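/- Let N ≥ 1, d ≥ 1, and let χ : {0,1,…,N} → ℕ satisfy χ(0) = χ(N) = 1 and χ(i) ≥ 1. For each site i = 1,…,N let A^{[i]} : Fin d → Matrix (Fin χ(i−1)) (Fin χ(i)) ℂ be an arbitrary family of matrices, and for each interior bond i = 1,…,N−1 let P_i ∈ Matrix (Fin χ(i)) (Fin χ(i)) ℂ be Hermitian. Define Φ : (Fin N → Fin d) → ℂ by Φ(σ) = the unique entry of A^{[1]σ(1)} P_1 A^{[2]σ(2)} P_2 ⋯ P_{N−1} A^{[N]σ(N)}, and define matrices Y^{[i]} ∈ Matrix (Fin χ(i−1)) (Fin χ(i−1)) ℂ recursively by Y^{[N]} = Σ_σ A^{[N]σ} (A^{[N]σ})ᴴ and Y^{[i]} = Σ_σ A^{[i]σ} (P_i Y^{[i+1]} P_i) (A^{[i]σ})ᴴ for i = N−1, …, 1. Then Σ_σ |Φ(σ)|² = Tr(Y^{[1]}). -/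

import Mathlib

/-!
Contract the chain from the left. If `W_k(σ)` is the partial product over the first `k` sites,
one step of the recursion gives `∑_σ Tr(W_k Y^{[k+1]} W_kᴴ) = ∑_σ Tr(W_{k+1} Y^{[k+2]} W_{k+1}ᴴ)`
(the `P`'s are Hermitian, so `(W_k A P)ᴴ = P Aᴴ W_kᴴ`), hence `Tr Y^{[1]} = ∑_σ Tr(W_N W_Nᴴ)`,
and `W_N(σ)` is the `1 × 1` matrix `Φ(σ)`.
-/

open Matrix

/-- Partial product `A¹ P₁ A² P₂ ⋯ P_{N-1} Aⁱ` (the projector/Hermitian matrix `P j` is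
inserted at every interior bond `j = 1, …, N − 1`; the tensor `A i` belongs to site `i + 1`). -/
noncomputable def genWT {d : ℕ} (N : ℕ) (χ : ℕ → ℕ)
    (A : (i : ℕ) → Fin d → Matrix (Fin (χ i)) (Fin (χ (i + 1))) ℂ)
    (P : (i : ℕ) → Matrix (Fin (χ i)) (Fin (χ i)) ℂ) :
    (i : ℕ) → (ℕ → Fin d) → Matrix (Fin (χ 0)) (Fin (χ i)) ℂ
  | 0, _ => 1
  | (i + 1), σ => genWT N χ A P i σ * A i (σ i) * (if i + 1 < N then P (i + 1) else 1)

/-- `Φ(σ)`: the unique entry (written as the sum of all entries) of the `1 × 1` matrix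
`A^{[1]σ(1)} P₁ A^{[2]σ(2)} P₂ ⋯ P_{N−1} A^{[N]σ(N)}` (here `χ 0 = χ N = 1`). -/
noncomputable def genPhi {d : ℕ} [NeZero d] (N : ℕ) (χ : ℕ → ℕ)
    (A : (i : ℕ) → Fin d → Matrix (Fin (χ i)) (Fin (χ (i + 1))) ℂ)
    (P : (i : ℕ) → Matrix (Fin (χ i)) (Fin (χ i)) ℂ)
    (σ : Fin N → Fin d) : ℂ :=
  ∑ a, ∑ b, genWT N χ A P N (fun k => if h : k < N then σ ⟨k, h⟩ else 0) a b

section Algebra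

variable {ι l m n R : Type*} [Fintype ι] [Fintype m] [Fintype n] [CommSemiring R] [StarRing R]

theorem sum_trace_conj_sandwich [Fintype l] (W : Matrix l m R) (B : ι → Matrix m n R)
    {Q : Matrix n n R} (hQ : Qᴴ = Q) (Z : Matrix n n R) :
    ∑ s, trace (W * B s * Q * Z * (W * B s * Q)ᴴ) =
      trace (W * (∑ s, B s * (Q * Z * Q) * (B s)ᴴ) * Wᴴ) := by
  simp only [Matrix.mul_sum, Matrix.sum_mul, trace_sum, conjTranspose_mul, hQ, Matrix.mul_assoc]

theorem trace_mul_conjTranspose_of_unique [Unique m] [Unique n] (W : Matrix m n ℂ) :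
    trace (W * Wᴴ) = ((‖W default default‖ ^ 2 : ℝ) : ℂ) := by
  simp [trace, mul_apply, Complex.mul_conj']

end Algebra

def natExtend {α : Type*} {k : ℕ} (σ : Fin k → α) (a : α) (j : ℕ) : α :=
  if h : j < k then σ ⟨j, h⟩ else a

theorem natExtend_snoc_of_lt {α : Type*} {k : ℕ} (τ : Fin k → α) (s a : α) {j : ℕ} (hj : j < k) :
    natExtend (Fin.snoc τ s : Fin (k + 1) → α) a j = natExtend τ a j := by
  simp [natExtend, hj, Nat.lt_succ_of_lt hj, Fin.snoc]

theorem natExtend_snoc_self {α : Type*} {k : ℕ} (τ : Fin k → α) (s a : α) :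
    natExtend (Fin.snoc τ s : Fin (k + 1) → α) a k = s := by
  simp [natExtend, Fin.snoc]

section Transfer

variable {d : ℕ} (N : ℕ) (χ : ℕ → ℕ)
  (A : (i : ℕ) → Fin d → Matrix (Fin (χ i)) (Fin (χ (i + 1))) ℂ)
  (P : (i : ℕ) → Matrix (Fin (χ i)) (Fin (χ i)) ℂ)

def bondMatrix (i : ℕ) : Matrix (Fin (χ i)) (Fin (χ i)) ℂ := if i < N then P i else 1

/-- The paper's `Y^{[k+1]}` for `k < N`; the identity closes the chain at the right end. -/
def rightEnv (Y : (j : ℕ) → Matrix (Fin (χ j)) (Fin (χ j)) ℂ) (k : ℕ) :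
    Matrix (Fin (χ k)) (Fin (χ k)) ℂ := if k < N then Y k else 1

theorem genWT_succ (i : ℕ) (σ : ℕ → Fin d) :
    genWT N χ A P (i + 1) σ = genWT N χ A P i σ * A i (σ i) * bondMatrix N χ P (i + 1) := rfl

theorem genWT_congr (i : ℕ) {σ τ : ℕ → Fin d} (h : ∀ j < i, σ j = τ j) :
    genWT N χ A P i σ = genWT N χ A P i τ := by
  induction i with
  | zero => rfl
  | succ i ih =>
    rw [genWT_succ, genWT_succ, ih fun j hj => h j (Nat.lt_succ_of_lt hj), h i (Nat.lt_succ_self i)]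

theorem genWT_snoc (k : ℕ) (τ : Fin k → Fin d) (s a : Fin d) :
    genWT N χ A P (k + 1) (natExtend (Fin.snoc τ s : Fin (k + 1) → Fin d) a) =
      genWT N χ A P k (natExtend τ a) * A k s * bondMatrix N χ P (k + 1) := by
  rw [genWT_succ, natExtend_snoc_self,
    genWT_congr N χ A P k fun j hj => natExtend_snoc_of_lt τ s a hj]

theorem bondMatrix_conjTranspose (hP : ∀ i, 1 ≤ i → i < N → (P i)ᴴ = P i) (k : ℕ) :
    (bondMatrix N χ P (k + 1))ᴴ = bondMatrix N χ P (k + 1) := by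
  unfold bondMatrix
  split_ifs with h
  · exact hP (k + 1) (Nat.succ_pos k) h
  · exact conjTranspose_one

/-- `hYN` is the case `k = N - 1` of the recursion, with `1` in place of `P N` and `Y N`. -/
theorem rightEnv_eq_sum (Y : (j : ℕ) → Matrix (Fin (χ j)) (Fin (χ j)) ℂ)
    (hYN : Y (N - 1) = ∑ s : Fin d, A (N - 1) s * (A (N - 1) s)ᴴ)
    (hYrec : ∀ j, j + 1 < N →
      Y j = ∑ s : Fin d, A j s * (P (j + 1) * Y (j + 1) * P (j + 1)) * (A j s)ᴴ)
    {k : ℕ} (hk : k < N) :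
    rightEnv N χ Y k = ∑ s : Fin d, A k s *
      (bondMatrix N χ P (k + 1) * rightEnv N χ Y (k + 1) * bondMatrix N χ P (k + 1)) *
        (A k s)ᴴ := by
  unfold rightEnv bondMatrix
  rw [if_pos hk]
  split_ifs with h
  · exact hYrec k h
  · obtain rfl : k = N - 1 := by omega
    simpa using hYN

theorem sum_trace_genWT_rightEnv [NeZero d] (Y : (j : ℕ) → Matrix (Fin (χ j)) (Fin (χ j)) ℂ)
    (hrec : ∀ k < N, rightEnv N χ Y k = ∑ s : Fin d, A k s *
      (bondMatrix N χ P (k + 1) * rightEnv N χ Y (k + 1) * bondMatrix N χ P (k + 1)) *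
        (A k s)ᴴ)
    (hP : ∀ k, (bondMatrix N χ P (k + 1))ᴴ = bondMatrix N χ P (k + 1)) :
    ∀ k ≤ N, ∑ σ : Fin k → Fin d,
      trace (genWT N χ A P k (natExtend σ 0) * rightEnv N χ Y k *
        (genWT N χ A P k (natExtend σ 0))ᴴ) = trace (rightEnv N χ Y 0) := by
  intro k hk
  induction k with
  | zero => simp [genWT]
  | succ k ih =>
    rw [← ih (Nat.le_of_succ_le hk), ← (Fin.snocEquiv fun _ => Fin d).sum_comp,
      Fintype.sum_prod_type, Finset.sum_comm]
    refine Finset.sum_congr rfl fun τ _ => ?_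
    simp only [Fin.snocEquiv, Equiv.coe_fn_mk, genWT_snoc]
    rw [sum_trace_conj_sandwich _ _ (hP k), ← hrec k hk]

end Transfer

/-- Here `Y j` is the paper's `Y^{[j+1]}`, living on bond `j`. -/
theorem truncated_mps_norm_eq_trace_of_transfer_recursion_general
    (N d : ℕ) [NeZero d] (hN : 1 ≤ N)
    (χ : ℕ → ℕ) (hχ0 : χ 0 = 1) (hχN : χ N = 1)
    (A : (i : ℕ) → Fin d → Matrix (Fin (χ i)) (Fin (χ (i + 1))) ℂ)
    (P : (i : ℕ) → Matrix (Fin (χ i)) (Fin (χ i)) ℂ)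
    (hP : ∀ i, 1 ≤ i → i < N → (P i)ᴴ = P i)
    (Y : (j : ℕ) → Matrix (Fin (χ j)) (Fin (χ j)) ℂ)
    (hYN : Y (N - 1) = ∑ s : Fin d, A (N - 1) s * (A (N - 1) s)ᴴ)
    (hYrec : ∀ j, j + 1 < N →
      Y j = ∑ s : Fin d, A j s * (P (j + 1) * Y (j + 1) * P (j + 1)) * (A j s)ᴴ) :
    Matrix.trace (Y 0) = ((∑ σ : Fin N → Fin d, ‖genPhi N χ A P σ‖ ^ 2 : ℝ) : ℂ) := by
  have : Unique (Fin (χ 0)) := hχ0 ▸ Fin.instUnique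
  have : Unique (Fin (χ N)) := hχN ▸ Fin.instUnique
  have hY0 : Y 0 = rightEnv N χ Y 0 := (if_pos hN).symm
  rw [hY0, ← sum_trace_genWT_rightEnv N χ A P Y (fun _ => rightEnv_eq_sum N χ A P Y hYN hYrec)
    (bondMatrix_conjTranspose N χ P hP) N le_rfl, Complex.ofReal_sum]
  refine Finset.sum_congr rfl fun σ _ => ?_
  rw [rightEnv, if_neg (lt_irrefl N), Matrix.mul_one, trace_mul_conjTranspose_of_unique, genPhi,
    Fintype.sum_unique, Fintype.sum_unique]
  rfl

/-- transfer-matrix identity, Eqs. (22)–(25) of the paper: the squared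
ℓ²-norm of the truncated matrix-product wavefunction `Φ` equals the trace of the iterated
transfer-matrix recursion.  Here `Y j` is the matrix `Y^{[j+1]}` of the paper, living on
bond `j`, so `Y (N-1) = Y^{[N]} = ∑_σ A^{[N]σ} (A^{[N]σ})ᴴ`, the recursion reads
`Y^{[i]} = ∑_σ A^{[i]σ} (P_i Y^{[i+1]} P_i) (A^{[i]σ})ᴴ` for `i = N−1, …, 1`, and the
conclusion is `∑_σ |Φ(σ)|² = Tr(Y^{[1]}) = Tr(Y 0)`. -/
theorem truncated_mps_norm_eq_trace_of_transfer_recursion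
    (N d : ℕ) [NeZero d] (hN : 1 ≤ N)
    (χ : ℕ → ℕ) (hχ0 : χ 0 = 1) (hχN : χ N = 1) (hχpos : ∀ i, 1 ≤ χ i)
    (A : (i : ℕ) → Fin d → Matrix (Fin (χ i)) (Fin (χ (i + 1))) ℂ)
    (P : (i : ℕ) → Matrix (Fin (χ i)) (Fin (χ i)) ℂ)
    (hP : ∀ i, 1 ≤ i → i < N → (P i)ᴴ = P i)
    (Y : (j : ℕ) → Matrix (Fin (χ j)) (Fin (χ j)) ℂ)
    (hYN : Y (N - 1) = ∑ s : Fin d, A (N - 1) s * (A (N - 1) s)ᴴ)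
    (hYrec : ∀ j, j + 1 < N →
      Y j = ∑ s : Fin d, A j s * (P (j + 1) * Y (j + 1) * P (j + 1)) * (A j s)ᴴ) :
    Matrix.trace (Y 0) = ((∑ σ : Fin N → Fin d, ‖genPhi N χ A P σ‖ ^ 2 : ℝ) : ℂ) :=
  truncated_mps_norm_eq_trace_of_transfer_recursion_general N d hN χ hχ0 hχN A P hP Y hYN hYrec
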